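/- arXiv:2108.12425 — 2 statements merged into one kernel-verified Lean document; each statement's English description precedes it below -/
import Mathlib

section
/- Let D₁ ∈ B(H₁), D₂ ∈ B(H₂) with H₁, H₂ infinite-dimensional separable complex Hilbert spaces. If D₁ is upper semi-Fredholm, range(D₂) is closed, and either β(D₁) = ∞ or (D₂ is upper semi-Fredholm), then there exists A ∈ B(H₂, H₁) such that T = [[D₁, A],[0, D₂]] is upper semi-Fredholm. -/
noncomputable section

open Cardinal

/-- The nullity `α(T)`: the dimension of the kernel of `T`. -/
def nullity {E F : Type*} [NormedAddCommGroup E] [NormedSpace ℂ E]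
    [NormedAddCommGroup F] [NormedSpace ℂ F] (T : E →L[ℂ] F) : Cardinal :=
  Module.rank ℂ (LinearMap.ker (T : E →ₗ[ℂ] F))

/-- The deficiency `β(T)`: the codimension of the range of `T`. -/
def deficiency {E F : Type*} [NormedAddCommGroup E] [NormedSpace ℂ E]
    [NormedAddCommGroup F] [NormedSpace ℂ F] (T : E →L[ℂ] F) : Cardinal :=
  Module.rank ℂ (F ⧸ LinearMap.range (T : E →ₗ[ℂ] F))

/-- Upper semi-Fredholm: finite-dimensional kernel and closed range. -/
def UpperSemiFredholm {E F : Type*} [NormedAddCommGroup E] [NormedSpace ℂ E]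
    [NormedAddCommGroup F] [NormedSpace ℂ F] (T : E →L[ℂ] F) : Prop :=
  nullity T < ℵ₀ ∧ IsClosed ((LinearMap.range (T : E →ₗ[ℂ] F) : Submodule ℂ F) : Set F)

/-- Lower semi-Fredholm: range of finite codimension. -/
def LowerSemiFredholm {E F : Type*} [NormedAddCommGroup E] [NormedSpace ℂ E]
    [NormedAddCommGroup F] [NormedSpace ℂ F] (T : E →L[ℂ] F) : Prop :=
  deficiency T < ℵ₀

/-- Fredholm: finite nullity and finite deficiency. -/
def IsFredholmOp {E F : Type*} [NormedAddCommGroup E] [NormedSpace ℂ E]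
    [NormedAddCommGroup F] [NormedSpace ℂ F] (T : E →L[ℂ] F) : Prop :=
  nullity T < ℵ₀ ∧ deficiency T < ℵ₀

/-- The upper triangular block operator matrix `[[D₁, A], [0, D₂]]` on `H₁ ⊕ H₂`. -/
def blockUT {H₁ H₂ : Type*} [NormedAddCommGroup H₁] [NormedSpace ℂ H₁]
    [NormedAddCommGroup H₂] [NormedSpace ℂ H₂]
    (D₁ : H₁ →L[ℂ] H₁) (D₂ : H₂ →L[ℂ] H₂) (A : H₂ →L[ℂ] H₁) :
    (H₁ × H₂) →L[ℂ] (H₁ × H₂) :=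
  (D₁.comp (ContinuousLinearMap.fst ℂ H₁ H₂) +
      A.comp (ContinuousLinearMap.snd ℂ H₁ H₂)).prod
    (D₂.comp (ContinuousLinearMap.snd ℂ H₁ H₂))

universe u
variable {H₁ H₂ : Type u}
  [NormedAddCommGroup H₁] [InnerProductSpace ℂ H₁] [CompleteSpace H₁]
  [TopologicalSpace.SeparableSpace H₁]
  [NormedAddCommGroup H₂] [InnerProductSpace ℂ H₂] [CompleteSpace H₂]
  [TopologicalSpace.SeparableSpace H₂]

def Submodule.prodEquivAux {R M N : Type*} [Semiring R] [AddCommMonoid M] [AddCommMonoid N]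
    [Module R M] [Module R N] (p : Submodule R M) (q : Submodule R N) :
    (p.prod q) ≃ₗ[R] (p × q) where
  toFun x := (⟨x.1.1, x.2.1⟩, ⟨x.1.2, x.2.2⟩)
  invFun x := ⟨(x.1, x.2), ⟨x.1.2, x.2.2⟩⟩
  map_add' _ _ := rfl
  map_smul' _ _ := rfl
  left_inv _ := rfl
  right_inv _ := rfl

theorem blockUT_apply {H₁ H₂ : Type*} [NormedAddCommGroup H₁] [NormedSpace ℂ H₁]
    [NormedAddCommGroup H₂] [NormedSpace ℂ H₂]
    (D₁ : H₁ →L[ℂ] H₁) (D₂ : H₂ →L[ℂ] H₂) (A : H₂ →L[ℂ] H₁) (p : H₁ × H₂) :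
    blockUT D₁ D₂ A p = (D₁ p.1 + A p.2, D₂ p.2) := rfl

theorem countable_of_one_le_dist {X : Type*} [MetricSpace X]
    [TopologicalSpace.SeparableSpace X] {s : Set X}
    (h : ∀ x ∈ s, ∀ y ∈ s, x ≠ y → 1 ≤ dist x y) : s.Countable := by
  obtain ⟨d, hdc, hdd⟩ := TopologicalSpace.exists_countable_dense X
  have pick : ∀ x : s, ∃ p : d, dist (x : X) (p : X) < 1/2 := by
    intro x
    obtain ⟨y, hy, hlt⟩ := Metric.mem_closure_iff.mp (hdd (x : X)) (1/2) (by norm_num)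
    exact ⟨⟨y, hy⟩, hlt⟩
  choose f hf using pick
  have hinj : Function.Injective f := by
    intro x y hxy
    by_contra hne
    have hne' : (x : X) ≠ (y : X) := fun hh => hne (Subtype.ext hh)
    have h1 := h x x.2 y y.2 hne'
    have h4 : dist (x : X) (y : X) ≤ dist (x : X) (f x : X) + dist (f y : X) (y : X) := by
      calc dist (x : X) (y : X) ≤ dist (x : X) (f x : X) + dist (f x : X) (y : X) :=
            dist_triangle _ _ _
        _ = dist (x : X) (f x : X) + dist (f y : X) (y : X) := by rw [hxy, dist_comm]
    have h2 := hf x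
    have h3 := hf y
    rw [dist_comm] at h3
    linarith
  have : Countable d := hdc.to_subtype
  have : Countable s := hinj.countable
  exact Set.countable_coe_iff.mp this

theorem orthonormal_dist {E : Type*} [NormedAddCommGroup E] [InnerProductSpace ℂ E]
    {ι : Type*} {v : ι → E} (hv : Orthonormal ℂ v) {i j : ι} (hij : i ≠ j) :
    1 ≤ dist (v i) (v j) := by
  rw [dist_eq_norm]
  have h0 : (inner ℂ (v i) (v j) : ℂ) = 0 := hv.2 hij
  have h2 : ‖v i - v j‖ ^ 2 = 2 := by
    rw [@norm_sub_sq ℂ, h0, hv.1 i, hv.1 j]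
    norm_num
  nlinarith [norm_nonneg (v i - v j)]

theorem exists_linearIsometry_of_separable (E F : Type u)
    [NormedAddCommGroup E] [InnerProductSpace ℂ E] [CompleteSpace E]
    [TopologicalSpace.SeparableSpace E]
    [NormedAddCommGroup F] [InnerProductSpace ℂ F] [CompleteSpace F]
    (hF : ¬ FiniteDimensional ℂ F) : Nonempty (E →ₗᵢ[ℂ] F) := by
  obtain ⟨w, b, hb⟩ := exists_hilbertBasis ℂ E
  obtain ⟨t, c, hc⟩ := exists_hilbertBasis ℂ F
  have hwo : Orthonormal ℂ ((↑) : w → E) := hb ▸ b.orthonormal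
  have hwc : w.Countable := by
    apply countable_of_one_le_dist
    rintro x hx y hy hxy
    exact orthonormal_dist hwo (i := ⟨x, hx⟩) (j := ⟨y, hy⟩) (by simpa using hxy)
  have htinf : ℵ₀ ≤ #t := by
    rw [Cardinal.aleph0_le_mk_iff]
    by_contra hfin
    rw [not_infinite_iff_finite] at hfin
    have : Fintype t := Fintype.ofFinite _
    exact hF (Module.Finite.of_basis c.toOrthonormalBasis.toBasis)
  have hle : #w ≤ #t := le_trans (mk_le_aleph0_iff.mpr hwc.to_subtype) htinf
  obtain ⟨f⟩ := Cardinal.le_def _ _ |>.mp hle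
  have hv : Orthonormal ℂ (fun i : w => c (f i)) := c.orthonormal.comp f f.injective
  exact ⟨(hv.orthogonalFamily.linearIsometry).comp b.repr.toLinearIsometry⟩


theorem stmt_8 (h1 : ¬ FiniteDimensional ℂ H₁) (h2 : ¬ FiniteDimensional ℂ H₂)
    (D₁ : H₁ →L[ℂ] H₁) (D₂ : H₂ →L[ℂ] H₂)
    (ha : UpperSemiFredholm D₁)
    (hb : IsClosed ((LinearMap.range (D₂ : H₂ →ₗ[ℂ] H₂) : Submodule ℂ H₂) : Set H₂))
    (hc : ℵ₀ ≤ deficiency D₁ ∨ UpperSemiFredholm D₂) :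
    ∃ A : H₂ →L[ℂ] H₁, UpperSemiFredholm (blockUT D₁ D₂ A) := by
  rcases hc with hc | hc
  · -- β(D₁) infinite
    set R : Submodule ℂ H₁ := LinearMap.range (D₁ : H₁ →ₗ[ℂ] H₁) with hR
    haveI : CompleteSpace R := ha.2.completeSpace_coe
    set W : Submodule ℂ H₁ := Rᗮ with hW
    have hcompl : IsCompl R W := Submodule.isCompl_orthogonal_of_hasOrthogonalProjection
    have hWrank : ℵ₀ ≤ Module.rank ℂ W := by
      have e : (H₁ ⧸ R) ≃ₗ[ℂ] W := Submodule.quotientEquivOfIsCompl R W hcompl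
      calc ℵ₀ ≤ Module.rank ℂ (H₁ ⧸ R) := hc
        _ = Module.rank ℂ W := e.rank_eq
    have hWfd : ¬ FiniteDimensional ℂ W := by
      intro hfd
      exact absurd (Module.rank_lt_aleph0 ℂ W) (not_lt.mpr hWrank)
    haveI : CompleteSpace W := R.isClosed_orthogonal.completeSpace_coe
    obtain ⟨J⟩ := exists_linearIsometry_of_separable H₂ W hWfd
    set A : H₂ →L[ℂ] H₁ := W.subtypeL.comp J.toContinuousLinearMap with hA
    have hAmem : ∀ y, A y ∈ W := fun y => (J y).2
    have hAnorm : ∀ y, ‖A y‖ = ‖y‖ := fun y => J.norm_map y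
    have hAinj : ∀ y, A y = 0 → y = 0 := by
      intro y hy
      have : ‖y‖ = 0 := by rw [← hAnorm y, hy, norm_zero]
      simpa using this
    refine ⟨A, ?_, ?_⟩
    · -- finite nullity
      have hker : LinearMap.ker (blockUT D₁ D₂ A : (H₁ × H₂) →ₗ[ℂ] (H₁ × H₂)) =
          (LinearMap.ker (D₁ : H₁ →ₗ[ℂ] H₁)).prod (⊥ : Submodule ℂ H₂) := by
        ext ⟨x, y⟩
        simp only [LinearMap.mem_ker, Submodule.mem_prod, Submodule.mem_bot,
          ContinuousLinearMap.coe_coe, blockUT_apply, Prod.mk_eq_zero]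
        constructor
        · rintro ⟨hxy, hy⟩
          have hD1x : D₁ x = -(A y) := by linear_combination (norm := abel) hxy
          have horth : (inner ℂ (D₁ x) (D₁ x) : ℂ) = 0 := by
            have hm := hAmem y
            rw [hW, Submodule.mem_orthogonal] at hm
            have h0 := hm (D₁ x) (LinearMap.mem_range_self _ x)
            calc (inner ℂ (D₁ x) (D₁ x) : ℂ) = inner ℂ (D₁ x) (-(A y)) := by rw [← hD1x]
              _ = 0 := by rw [inner_neg_right, h0, neg_zero]
          have hx0 : D₁ x = 0 := inner_self_eq_zero.mp horth
          have hy0 : y = 0 := by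
            apply hAinj
            rw [← neg_eq_zero, ← hD1x, hx0]
          exact ⟨hx0, hy0⟩
        · rintro ⟨hx, hy⟩
          subst hy
          simp [hx]
      rw [UpperSemiFredholm, nullity, hker] at *
      have e := Submodule.prodEquivAux (LinearMap.ker (D₁ : H₁ →ₗ[ℂ] H₁)) (⊥ : Submodule ℂ H₂)
      rw [e.rank_eq, rank_prod', rank_bot, add_zero]
      exact ha.1
    · -- closed range
      apply IsSeqClosed.isClosed
      intro p q hmem htend
      have hmem' : ∀ n, ∃ z : H₁ × H₂, blockUT D₁ D₂ A z = p n := fun n => hmem n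
      choose z hz using hmem'
      set x : ℕ → H₁ := fun n => (z n).1
      set y : ℕ → H₂ := fun n => (z n).2
      have hz1 : ∀ n, (p n).1 = D₁ (x n) + A (y n) := by
        intro n; rw [← hz n, blockUT_apply]
      have hz2 : ∀ n, (p n).2 = D₂ (y n) := by
        intro n; rw [← hz n, blockUT_apply]
      set g : H₁ →L[ℂ] H₁ := W.subtypeL.comp (W.orthogonalProjectionOnto) with hg
      have hgA : ∀ n, g ((p n).1) = A (y n) := by
        intro n
        rw [hz1 n, map_add]
        have e1 : g (D₁ (x n)) = 0 := by
          have hmem1 : D₁ (x n) ∈ Wᗮ :=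
            R.le_orthogonal_orthogonal (LinearMap.mem_range_self _ (x n))
          simp [hg, Submodule.orthogonalProjectionOnto_apply_of_mem_orthogonal hmem1]
        have e2 : g (A (y n)) = A (y n) := by
          simpa [hg] using Submodule.starProjection_eq_self_iff.mpr (hAmem (y n))
        rw [e1, e2, zero_add]
      have htend1 : Filter.Tendsto (fun n => (p n).1) Filter.atTop (nhds q.1) :=
        (continuous_fst.tendsto q).comp htend
      have htend2 : Filter.Tendsto (fun n => (p n).2) Filter.atTop (nhds q.2) :=
        (continuous_snd.tendsto q).comp htend
      have htendA : Filter.Tendsto (fun n => A (y n)) Filter.atTop (nhds (g q.1)) := by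
        have h5 := (g.continuous.tendsto q.1).comp htend1
        simp only [Function.comp_def, hgA] at h5
        exact h5
      have hAiso : Isometry A := AddMonoidHomClass.isometry_of_norm A hAnorm
      have hcy : CauchySeq y := by
        have hcA : CauchySeq (fun n => A (y n)) := htendA.cauchySeq
        have hcA' : Cauchy (Filter.map (⇑A) (Filter.map y Filter.atTop)) := by
          rw [Filter.map_map]; exact hcA
        exact hAiso.isUniformInducing.cauchy_map_iff.mp hcA'

      obtain ⟨ylim, hylim⟩ := cauchySeq_tendsto_of_complete hcy
      have hAylim : A ylim = g q.1 := by
        have : Filter.Tendsto (fun n => A (y n)) Filter.atTop (nhds (A ylim)) :=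
          (A.continuous.tendsto ylim).comp hylim
        exact tendsto_nhds_unique this htendA
      have htendD1 : Filter.Tendsto (fun n => D₁ (x n)) Filter.atTop (nhds (q.1 - A ylim)) := by
        have : (fun n => D₁ (x n)) = fun n => (p n).1 - A (y n) := by
          funext n; rw [hz1 n]; abel
        rw [this]
        exact htend1.sub (hAylim ▸ htendA)
      have hd1mem : q.1 - A ylim ∈ R := by
        have : ∀ n, D₁ (x n) ∈ (R : Set H₁) := fun n => LinearMap.mem_range_self _ (x n)
        exact ha.2.mem_of_tendsto htendD1 (Filter.Eventually.of_forall this)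
      obtain ⟨xlim, hxlim⟩ := hd1mem
      have hD2 : D₂ ylim = q.2 := by
        have t1 : Filter.Tendsto (fun n => D₂ (y n)) Filter.atTop (nhds (D₂ ylim)) :=
          (D₂.continuous.tendsto ylim).comp hylim
        have t2 : Filter.Tendsto (fun n => D₂ (y n)) Filter.atTop (nhds q.2) := by
          have : (fun n => D₂ (y n)) = fun n => (p n).2 := by funext n; rw [hz2 n]
          rw [this]; exact htend2
        exact tendsto_nhds_unique t1 t2
      refine ⟨(xlim, ylim), ?_⟩
      rw [ContinuousLinearMap.coe_coe, blockUT_apply]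
      have : D₁ xlim + A ylim = q.1 := by rw [show D₁ xlim = q.1 - A ylim from hxlim]; abel
      rw [this, hD2]
  · -- D₂ upper semi-Fredholm, take A = 0
    refine ⟨0, ?_, ?_⟩
    · have hker : LinearMap.ker (blockUT D₁ D₂ 0 : (H₁ × H₂) →ₗ[ℂ] (H₁ × H₂)) =
          (LinearMap.ker (D₁ : H₁ →ₗ[ℂ] H₁)).prod (LinearMap.ker (D₂ : H₂ →ₗ[ℂ] H₂)) := by
        ext ⟨x, y⟩
        simp [blockUT_apply, LinearMap.mem_ker, Prod.mk_eq_zero]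
      rw [nullity, hker]
      have e := Submodule.prodEquivAux (LinearMap.ker (D₁ : H₁ →ₗ[ℂ] H₁)) (LinearMap.ker (D₂ : H₂ →ₗ[ℂ] H₂))
      rw [e.rank_eq, rank_prod']
      exact Cardinal.add_lt_aleph0 ha.1 hc.1
    · have hrange : ((LinearMap.range (blockUT D₁ D₂ 0 : (H₁ × H₂) →ₗ[ℂ] (H₁ × H₂)) : Submodule ℂ (H₁ × H₂)) :
          Set (H₁ × H₂)) =
          ((LinearMap.range (D₁ : H₁ →ₗ[ℂ] H₁) : Submodule ℂ H₁) : Set H₁) ×ˢ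
          ((LinearMap.range (D₂ : H₂ →ₗ[ℂ] H₂) : Submodule ℂ H₂) : Set H₂) := by
        ext ⟨u, v⟩
        simp only [SetLike.mem_coe, LinearMap.mem_range, Set.mem_prod,
          ContinuousLinearMap.coe_coe]
        constructor
        · rintro ⟨⟨x, y⟩, hxy⟩
          rw [blockUT_apply] at hxy
          simp only [ContinuousLinearMap.zero_apply, add_zero, Prod.mk.injEq] at hxy
          exact ⟨⟨x, hxy.1⟩, ⟨y, hxy.2⟩⟩
        · rintro ⟨⟨x, hx⟩, ⟨y, hy⟩⟩
          exact ⟨(x, y), by rw [blockUT_apply]; simp [hx, hy]⟩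
      rw [hrange]
      exact ha.2.prod hc.2
end
end

section
/- Let H₁, H₂ be infinite-dimensional complex Hilbert spaces, D₁ ∈ B(H₁), D₂ ∈ B(H₂). If there exists A ∈ B(H₂, H₁) such that T = [[D₁, A],[0, D₂]] is Fredholm, then D₁ is upper semi-Fredholm, D₂ is lower semi-Fredholm, and either (β(D₁) = ∞ and α(D₂) = ∞) or (D₂ is upper semi-Fredholm and D₁ is lower semi-Fredholm). -/
noncomputable section

open Cardinal

section Aux

variable {X Y : Type*} [NormedAddCommGroup X] [NormedSpace ℂ X]
  [NormedAddCommGroup Y] [NormedSpace ℂ Y]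

def clmLiftQ (S : Submodule ℂ X) (f : X →L[ℂ] Y) (hf : S ≤ LinearMap.ker (f : X →ₗ[ℂ] Y)) :
    (X ⧸ S) →L[ℂ] Y :=
  LinearMap.mkContinuous (S.liftQ (f : X →ₗ[ℂ] Y) hf) ‖f‖ (by
    intro x
    refine le_of_forall_pos_le_add fun ε hε => ?_
    have hpos : (0:ℝ) < ‖f‖ + 1 := by positivity
    have hδ : 0 < ε / (‖f‖ + 1) := by positivity
    obtain ⟨m, rfl, hm⟩ := Submodule.Quotient.norm_mk_lt x hδ
    have h1 : S.liftQ (f : X →ₗ[ℂ] Y) hf (Submodule.Quotient.mk m) = f m := rfl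
    rw [h1]
    have h2 := f.le_opNorm m
    have h4 : ‖f‖ * (ε / (‖f‖ + 1)) ≤ ε := by
      rw [mul_div_assoc', div_le_iff₀ hpos]
      nlinarith [norm_nonneg f, hε.le]
    nlinarith [norm_nonneg f, mul_le_mul_of_nonneg_left hm.le (norm_nonneg f)])

@[simp] lemma clmLiftQ_mk (S : Submodule ℂ X) (f : X →L[ℂ] Y) (hf : S ≤ LinearMap.ker (f : X →ₗ[ℂ] Y))
    (x : X) : clmLiftQ S f hf (Submodule.Quotient.mk x) = f x := rfl

/-- A continuous linear map between Banach spaces whose range has finite codimension has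
closed range. -/
theorem isClosed_range_of_deficiency_lt [CompleteSpace X] [CompleteSpace Y]
    (f : X →L[ℂ] Y) (h : Module.rank ℂ (Y ⧸ LinearMap.range (f : X →ₗ[ℂ] Y)) < ℵ₀) :
    IsClosed ((LinearMap.range (f : X →ₗ[ℂ] Y) : Submodule ℂ Y) : Set Y) := by
  haveI hK : IsClosed ((LinearMap.ker (f : X →ₗ[ℂ] Y) : Submodule ℂ X) : Set X) := ContinuousLinearMap.isClosed_ker f
  set K := LinearMap.ker (f : X →ₗ[ℂ] Y) with hKdef
  set fbar : (X ⧸ K) →L[ℂ] Y := clmLiftQ K f le_rfl with hfbar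
  have hrange : LinearMap.range (fbar : (X ⧸ K) →ₗ[ℂ] Y) = LinearMap.range (f : X →ₗ[ℂ] Y) := by
    ext y
    constructor
    · rintro ⟨x, rfl⟩
      obtain ⟨m, rfl⟩ := Submodule.Quotient.mk_surjective K x
      exact ⟨m, rfl⟩
    · rintro ⟨x, rfl⟩
      exact ⟨Submodule.Quotient.mk x, rfl⟩
  have hker : LinearMap.ker (fbar : (X ⧸ K) →ₗ[ℂ] Y) = ⊥ := by
    rw [eq_bot_iff]
    rintro x hx
    obtain ⟨m, rfl⟩ := Submodule.Quotient.mk_surjective K x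
    have hm : f m = 0 := hx
    rw [Submodule.mem_bot, Submodule.Quotient.mk_eq_zero]
    exact hm
  haveI : FiniteDimensional ℂ (Y ⧸ LinearMap.range (f : X →ₗ[ℂ] Y)) := Module.rank_lt_aleph0_iff.mp h
  obtain ⟨F, hF⟩ := Submodule.exists_isCompl (LinearMap.range (f : X →ₗ[ℂ] Y))
  haveI : FiniteDimensional ℂ F :=
    (Submodule.quotientEquivOfIsCompl _ F hF).finiteDimensional
  haveI : CompleteSpace F := FiniteDimensional.complete ℂ F
  set Φ : ((X ⧸ K) × F) →L[ℂ] Y :=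
    fbar.comp (ContinuousLinearMap.fst ℂ (X ⧸ K) F) +
      F.subtypeL.comp (ContinuousLinearMap.snd ℂ (X ⧸ K) F) with hΦ
  have hΦapp : ∀ p : (X ⧸ K) × F, Φ p = fbar p.1 + (p.2 : Y) := fun p => rfl
  have hΦker : LinearMap.ker (Φ : ((X ⧸ K) × F) →ₗ[ℂ] Y) = ⊥ := by
    rw [eq_bot_iff]
    rintro ⟨a, b⟩ hab
    have h0 : fbar a + (b : Y) = 0 := hab
    have hmem : fbar a ∈ LinearMap.range (f : X →ₗ[ℂ] Y) ⊓ F := by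
      refine ⟨hrange ▸ ⟨a, rfl⟩, ?_⟩
      have hb : fbar a = -(b : Y) := eq_neg_of_add_eq_zero_left h0
      rw [hb]
      exact F.neg_mem b.2
    rw [hF.inf_eq_bot, Submodule.mem_bot] at hmem
    have ha : a = 0 := by
      have : a ∈ LinearMap.ker (fbar : (X ⧸ K) →ₗ[ℂ] Y) := hmem
      rwa [hker, Submodule.mem_bot] at this
    have hb : (b : Y) = 0 := by
      rw [hmem] at h0; simpa using h0
    rw [Submodule.mem_bot]
    exact Prod.ext ha (Subtype.ext hb)
  have hΦrange : LinearMap.range (Φ : ((X ⧸ K) × F) →ₗ[ℂ] Y) = ⊤ := by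
    rw [eq_top_iff]
    rintro y -
    have hy : y ∈ LinearMap.range (f : X →ₗ[ℂ] Y) ⊔ F := by rw [hF.sup_eq_top]; trivial
    obtain ⟨r, hr, s, hs, rfl⟩ := Submodule.mem_sup.mp hy
    rw [← hrange] at hr
    obtain ⟨a, rfl⟩ := hr
    exact ⟨(a, ⟨s, hs⟩), rfl⟩
  set e := ContinuousLinearEquiv.ofBijective Φ hΦker hΦrange with he
  have heapp : ∀ z, e z = Φ z := fun z => rfl
  have key : LinearMap.range (f : X →ₗ[ℂ] Y) =
      LinearMap.ker (((ContinuousLinearMap.snd ℂ (X ⧸ K) F).comp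
        (e.symm : Y →L[ℂ] (X ⧸ K) × F)) : Y →ₗ[ℂ] F) := by
    ext y
    rw [LinearMap.mem_ker]
    constructor
    · rintro ⟨x, rfl⟩
      have h1 : e (Submodule.Quotient.mk x, 0) = f x := by
        rw [heapp, hΦapp]; simp [hfbar]
      have h2 : e.symm (f x) = (Submodule.Quotient.mk x, 0) := by
        rw [← h1, ContinuousLinearEquiv.symm_apply_apply]
      show (e.symm (f x)).2 = 0
      rw [h2]
    · intro hy
      have h3 : y = Φ (e.symm y) := by
        rw [← heapp, ContinuousLinearEquiv.apply_symm_apply]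
      rw [hΦapp] at h3
      have h4 : ((e.symm y).2 : Y) = 0 := by
        have : (e.symm y).2 = 0 := hy
        rw [this]; rfl
      rw [h4, add_zero] at h3
      rw [h3, ← hrange]
      exact ⟨(e.symm y).1, rfl⟩
  rw [key]
  exact ContinuousLinearMap.isClosed_ker _

end Aux

section AuxB

variable {X Y : Type*} [NormedAddCommGroup X] [NormedSpace ℂ X]
  [NormedAddCommGroup Y] [NormedSpace ℂ Y]

/-- The sum of a closed subspace and a finite dimensional subspace is closed. -/
theorem isClosed_sup_of_fd (M K : Submodule ℂ X) (hM : IsClosed (M : Set X))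
    [FiniteDimensional ℂ K] : IsClosed ((M ⊔ K : Submodule ℂ X) : Set X) := by
  haveI : IsClosed (M : Set X) := hM
  set π : X →L[ℂ] X ⧸ M :=
    LinearMap.mkContinuous M.mkQ 1 (fun x => by
      simpa using Submodule.Quotient.norm_mk_le M x) with hπ
  haveI : FiniteDimensional ℂ (K.map M.mkQ) := Module.Finite.map K M.mkQ
  have hcomap : Submodule.comap M.mkQ (K.map M.mkQ) = M ⊔ K := by
    rw [Submodule.comap_map_eq, Submodule.ker_mkQ, sup_comm]
  have hset : ((M ⊔ K : Submodule ℂ X) : Set X) =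
      π ⁻¹' ((K.map M.mkQ : Submodule ℂ (X ⧸ M)) : Set (X ⧸ M)) := by
    rw [← hcomap]
    rfl
  rw [hset]
  exact ((K.map M.mkQ).closed_of_finiteDimensional).preimage π.continuous

/-- The image of a closed subspace under a continuous linear map with finite dimensional
kernel and closed range is closed. -/
theorem isClosed_map_of_fd_ker [CompleteSpace X] [CompleteSpace Y]
    (f : X →L[ℂ] Y) [FiniteDimensional ℂ (LinearMap.ker (f : X →ₗ[ℂ] Y))]
    (hr : IsClosed ((LinearMap.range (f : X →ₗ[ℂ] Y) : Submodule ℂ Y) : Set Y))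
    (M : Submodule ℂ X) (hM : IsClosed (M : Set X)) :
    IsClosed ((M.map (f : X →ₗ[ℂ] Y) : Submodule ℂ Y) : Set Y) := by
  set K := LinearMap.ker (f : X →ₗ[ℂ] Y) with hKdef
  obtain ⟨Q, hQc, hQ⟩ :=
    (Submodule.ClosedComplemented.of_finiteDimensional K).exists_isClosed_isCompl
  set W := M ⊔ K with hWdef
  have hWc : IsClosed (W : Set X) := isClosed_sup_of_fd M K hM
  set M' := Q ⊓ W with hM'def
  have hM'c : IsClosed (M' : Set X) := by
    have : (M' : Set X) = (Q : Set X) ∩ (W : Set X) := rfl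
    rw [this]
    exact hQc.inter hWc
  have hmapK : Submodule.map (f : X →ₗ[ℂ] Y) K = ⊥ := by
    rw [eq_bot_iff]
    rintro y ⟨x, hx, rfl⟩
    simp [LinearMap.mem_ker.mp hx]
  have hmapeq : Submodule.map (f : X →ₗ[ℂ] Y) M = Submodule.map (f : X →ₗ[ℂ] Y) M' := by
    have h1 : K ⊔ M' = W := by
      have h2 : K ⊔ Q ⊓ W = (K ⊔ Q) ⊓ W := (sup_inf_assoc_of_le Q (le_sup_right : K ≤ W)).symm
      rw [hM'def, h2, hQ.sup_eq_top, top_inf_eq]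
    calc Submodule.map (f : X →ₗ[ℂ] Y) M = Submodule.map (f : X →ₗ[ℂ] Y) M ⊔ Submodule.map (f : X →ₗ[ℂ] Y) K := by rw [hmapK, sup_bot_eq]
      _ = Submodule.map (f : X →ₗ[ℂ] Y) W := by rw [hWdef, Submodule.map_sup]
      _ = Submodule.map (f : X →ₗ[ℂ] Y) (K ⊔ M') := by rw [h1]
      _ = Submodule.map (f : X →ₗ[ℂ] Y) K ⊔ Submodule.map (f : X →ₗ[ℂ] Y) M' := by rw [Submodule.map_sup]
      _ = Submodule.map (f : X →ₗ[ℂ] Y) M' := by rw [hmapK, bot_sup_eq]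
  rw [hmapeq]
  haveI : CompleteSpace Q := hQc.completeSpace_coe
  haveI : CompleteSpace (LinearMap.range (f : X →ₗ[ℂ] Y)) := hr.completeSpace_coe
  set g : Q →L[ℂ] Y := f.comp Q.subtypeL with hg
  have hgr : LinearMap.range (g : Q →ₗ[ℂ] Y) = LinearMap.range (f : X →ₗ[ℂ] Y) := by
    apply le_antisymm
    · rintro y ⟨x, rfl⟩
      exact ⟨x, rfl⟩
    · rintro y ⟨x, rfl⟩
      have hx : x ∈ K ⊔ Q := by rw [hQ.sup_eq_top]; trivial
      obtain ⟨k, hk, q, hq, rfl⟩ := Submodule.mem_sup.mp hx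
      refine ⟨⟨q, hq⟩, ?_⟩
      show f q = f (k + q)
      rw [map_add, show f k = 0 from LinearMap.mem_ker.mp hk, zero_add]
  set g' : Q →L[ℂ] (LinearMap.range (f : X →ₗ[ℂ] Y)) :=
    g.codRestrict (LinearMap.range (f : X →ₗ[ℂ] Y)) (fun x => hgr ▸ LinearMap.mem_range_self _ x) with hg'
  have hg'ker : LinearMap.ker (g' : Q →ₗ[ℂ] LinearMap.range (f : X →ₗ[ℂ] Y)) = ⊥ := by
    rw [eq_bot_iff]
    rintro x hx
    have hfx : f (x : X) = 0 := congrArg Subtype.val (show g' x = 0 from hx)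
    have : (x : X) ∈ K ⊓ Q := ⟨hfx, x.2⟩
    rw [hQ.inf_eq_bot, Submodule.mem_bot] at this
    rw [Submodule.mem_bot]
    exact Subtype.ext this
  have hg'range : LinearMap.range (g' : Q →ₗ[ℂ] LinearMap.range (f : X →ₗ[ℂ] Y)) = ⊤ := by
    rw [eq_top_iff]
    rintro ⟨y, hy⟩ -
    rw [← hgr] at hy
    obtain ⟨x, hx⟩ := hy
    exact ⟨x, Subtype.ext hx⟩
  set e := ContinuousLinearEquiv.ofBijective g' hg'ker hg'range with he
  have heapp : ∀ z, e z = g' z := fun z => rfl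
  set D : Set Q := Subtype.val ⁻¹' (M' : Set X) with hD
  have hDc : IsClosed D := hM'c.preimage continuous_subtype_val
  have himg : ((Submodule.map (f : X →ₗ[ℂ] Y) M' : Submodule ℂ Y) : Set Y) = Subtype.val '' (e '' D) := by
    ext y
    constructor
    · rintro ⟨x, hx, rfl⟩
      have hxQ : (x : X) ∈ Q := hx.1
      refine ⟨e ⟨x, hxQ⟩, ⟨⟨x, hxQ⟩, hx, rfl⟩, ?_⟩
      rw [heapp]
      rfl
    · rintro ⟨-, ⟨⟨x, hxQ⟩, hxD, rfl⟩, rfl⟩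
      refine ⟨x, hxD, ?_⟩
      rw [heapp]
      rfl
  rw [himg]
  exact hr.isClosedEmbedding_subtypeVal.isClosedMap _ (e.toHomeomorph.isClosedMap D hDc)

end AuxB

universe u
variable {H₁ H₂ : Type u}
  [NormedAddCommGroup H₁] [InnerProductSpace ℂ H₁] [CompleteSpace H₁]
  [NormedAddCommGroup H₂] [InnerProductSpace ℂ H₂] [CompleteSpace H₂]

theorem stmt_19 (h1 : ¬ FiniteDimensional ℂ H₁) (h2 : ¬ FiniteDimensional ℂ H₂)
    (D₁ : H₁ →L[ℂ] H₁) (D₂ : H₂ →L[ℂ] H₂)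
    (hT : ∃ A : H₂ →L[ℂ] H₁, IsFredholmOp (blockUT D₁ D₂ A)) :
    UpperSemiFredholm D₁ ∧ LowerSemiFredholm D₂ ∧
      ((ℵ₀ ≤ deficiency D₁ ∧ ℵ₀ ≤ nullity D₂) ∨
        (UpperSemiFredholm D₂ ∧ LowerSemiFredholm D₁)) := by
  obtain ⟨A, hTn, hTd⟩ := hT
  set T := blockUT D₁ D₂ A with hTdef
  have hTapp : ∀ p : H₁ × H₂, T p = (D₁ p.1 + A p.2, D₂ p.2) := fun p => rfl
  -- (a) nullity D₁ ≤ nullity T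
  have hα1 : nullity D₁ ≤ nullity T := by
    have hmem : ∀ x : LinearMap.ker (D₁ : H₁ →ₗ[ℂ] H₁),
        ((LinearMap.inl ℂ H₁ H₂).comp (LinearMap.ker (D₁ : H₁ →ₗ[ℂ] H₁)).subtype) x ∈ LinearMap.ker (T : H₁ × H₂ →ₗ[ℂ] H₁ × H₂) := by
      intro x
      have : T ((x : H₁), (0 : H₂)) = 0 := by
        rw [hTapp]
        simp [LinearMap.mem_ker.mp x.2]
      exact this
    let j : LinearMap.ker (D₁ : H₁ →ₗ[ℂ] H₁) →ₗ[ℂ] LinearMap.ker (T : H₁ × H₂ →ₗ[ℂ] H₁ × H₂) :=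
      LinearMap.codRestrict _ ((LinearMap.inl ℂ H₁ H₂).comp (LinearMap.ker (D₁ : H₁ →ₗ[ℂ] H₁)).subtype) hmem
    have hj : Function.Injective j := by
      intro a b hab
      have h' : ((a : H₁), (0 : H₂)) = ((b : H₁), (0 : H₂)) := congrArg Subtype.val hab
      exact Subtype.ext (congrArg Prod.fst h')
    exact j.rank_le_of_injective hj
  -- (b) deficiency D₂ ≤ deficiency T
  have hβ2 : deficiency D₂ ≤ deficiency T := by
    have hcond : LinearMap.range (T : H₁ × H₂ →ₗ[ℂ] H₁ × H₂) ≤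
        LinearMap.ker ((LinearMap.range (D₂ : H₂ →ₗ[ℂ] H₂)).mkQ.comp (LinearMap.snd ℂ H₁ H₂)) := by
      rintro p ⟨x, rfl⟩
      rw [LinearMap.mem_ker]
      show (LinearMap.range (D₂ : H₂ →ₗ[ℂ] H₂)).mkQ (T x).2 = 0
      rw [hTapp, Submodule.mkQ_apply, Submodule.Quotient.mk_eq_zero]
      exact ⟨x.2, rfl⟩
    let q : ((H₁ × H₂) ⧸ LinearMap.range (T : H₁ × H₂ →ₗ[ℂ] H₁ × H₂)) →ₗ[ℂ] (H₂ ⧸ LinearMap.range (D₂ : H₂ →ₗ[ℂ] H₂)) :=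
      Submodule.liftQ _ ((LinearMap.range (D₂ : H₂ →ₗ[ℂ] H₂)).mkQ.comp (LinearMap.snd ℂ H₁ H₂)) hcond
    have hq : Function.Surjective q := by
      intro z
      obtain ⟨y, rfl⟩ := Submodule.Quotient.mk_surjective _ z
      exact ⟨Submodule.Quotient.mk ((0 : H₁), y), rfl⟩
    exact LinearMap.rank_le_of_surjective q hq
  -- (c) the subspace M₀
  set M₀ : Submodule ℂ H₁ := LinearMap.range (D₁ : H₁ →ₗ[ℂ] H₁) ⊔ Submodule.map (A : H₂ →ₗ[ℂ] H₁) (LinearMap.ker (D₂ : H₂ →ₗ[ℂ] H₂)) with hM₀def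
  have hM₀ : Module.rank ℂ (H₁ ⧸ M₀) ≤ deficiency T := by
    have hle : M₀ ≤ LinearMap.ker ((LinearMap.range (T : H₁ × H₂ →ₗ[ℂ] H₁ × H₂)).mkQ.comp (LinearMap.inl ℂ H₁ H₂)) := by
      rw [hM₀def]
      apply sup_le
      · rintro x ⟨u, rfl⟩
        rw [LinearMap.mem_ker]
        show (LinearMap.range (T : H₁ × H₂ →ₗ[ℂ] H₁ × H₂)).mkQ (D₁ u, (0 : H₂)) = 0
        rw [Submodule.mkQ_apply, Submodule.Quotient.mk_eq_zero]
        exact ⟨(u, 0), by rw [ContinuousLinearMap.coe_coe, hTapp]; simp⟩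
      · rintro x ⟨v, hv, rfl⟩
        rw [LinearMap.mem_ker]
        show (LinearMap.range (T : H₁ × H₂ →ₗ[ℂ] H₁ × H₂)).mkQ (A v, (0 : H₂)) = 0
        rw [Submodule.mkQ_apply, Submodule.Quotient.mk_eq_zero]
        exact ⟨(0, v), by rw [ContinuousLinearMap.coe_coe, hTapp]; simp [show D₂ v = 0 from LinearMap.mem_ker.mp hv]⟩
    let q := Submodule.liftQ M₀ ((LinearMap.range (T : H₁ × H₂ →ₗ[ℂ] H₁ × H₂)).mkQ.comp (LinearMap.inl ℂ H₁ H₂)) hle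
    have hqinj : Function.Injective q := by
      rw [← LinearMap.ker_eq_bot]
      apply Submodule.ker_liftQ_eq_bot
      rintro x hx
      have hx0 : (LinearMap.range (T : H₁ × H₂ →ₗ[ℂ] H₁ × H₂)).mkQ ((x, (0 : H₂))) = 0 := hx
      have hx' : (x, (0 : H₂)) ∈ LinearMap.range (T : H₁ × H₂ →ₗ[ℂ] H₁ × H₂) := by
        rwa [Submodule.mkQ_apply, Submodule.Quotient.mk_eq_zero] at hx0
      obtain ⟨⟨u, v⟩, huv⟩ := hx'
      rw [ContinuousLinearMap.coe_coe, hTapp] at huv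
      have hfst : D₁ u + A v = x := congrArg Prod.fst huv
      have hsnd : D₂ v = 0 := congrArg Prod.snd huv
      exact Submodule.mem_sup.mpr ⟨D₁ u, ⟨u, rfl⟩, A v, ⟨v, hsnd, rfl⟩, hfst⟩
    exact LinearMap.rank_le_of_injective q hqinj
  -- (d) nullity D₂ finite → deficiency D₁ finite
  have hd : nullity D₂ < ℵ₀ → deficiency D₁ < ℵ₀ := by
    intro hn2
    set R₁ := LinearMap.range (D₁ : H₁ →ₗ[ℂ] H₁) with hR₁
    set N := Submodule.map R₁.mkQ M₀ with hN
    have e3 := Submodule.quotientQuotientEquivQuotient R₁ M₀ le_sup_left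
    have hsum := rank_quotient_add_rank_of_divisionRing N
    have hq1 : Module.rank ℂ ((H₁ ⧸ R₁) ⧸ N) < ℵ₀ := by
      rw [e3.rank_eq]
      exact lt_of_le_of_lt hM₀ hTd
    have hq2 : Module.rank ℂ N < ℵ₀ := by
      have hz : Submodule.map R₁.mkQ R₁ = ⊥ := by
        rw [eq_bot_iff]
        rintro y ⟨x, hx, rfl⟩
        rw [Submodule.mem_bot, Submodule.mkQ_apply, Submodule.Quotient.mk_eq_zero]
        exact hx
      have hNeq : N = Submodule.map R₁.mkQ (Submodule.map (A : H₂ →ₗ[ℂ] H₁) (LinearMap.ker (D₂ : H₂ →ₗ[ℂ] H₂))) := by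
        rw [hN, hM₀def, Submodule.map_sup, hz, bot_sup_eq]
      rw [hNeq]
      calc Module.rank ℂ (Submodule.map R₁.mkQ (Submodule.map (A : H₂ →ₗ[ℂ] H₁) (LinearMap.ker (D₂ : H₂ →ₗ[ℂ] H₂))))
          ≤ Module.rank ℂ (Submodule.map (A : H₂ →ₗ[ℂ] H₁) (LinearMap.ker (D₂ : H₂ →ₗ[ℂ] H₂))) := rank_map_le _ _
        _ ≤ Module.rank ℂ (LinearMap.ker (D₂ : H₂ →ₗ[ℂ] H₂)) := rank_map_le _ _
        _ < ℵ₀ := hn2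
    calc deficiency D₁ = Module.rank ℂ ((H₁ ⧸ R₁) ⧸ N) + Module.rank ℂ N := hsum.symm
      _ < ℵ₀ := add_lt_aleph0 hq1 hq2
  -- (e) deficiency D₁ finite → nullity D₂ finite
  have he : deficiency D₁ < ℵ₀ → nullity D₂ < ℵ₀ := by
    intro hd1
    set R₁ := LinearMap.range (D₁ : H₁ →ₗ[ℂ] H₁) with hR₁
    set gg : H₂ →ₗ[ℂ] (H₁ ⧸ R₁) := R₁.mkQ.comp (A : H₂ →ₗ[ℂ] H₁) with hgg
    set P : Submodule ℂ H₂ := LinearMap.ker (D₂ : H₂ →ₗ[ℂ] H₂) ⊓ LinearMap.ker gg with hPdef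
    have hrankP : Module.rank ℂ P ≤ nullity T := by
      have hmem : ∀ p : LinearMap.ker (T : H₁ × H₂ →ₗ[ℂ] H₁ × H₂),
          ((LinearMap.snd ℂ H₁ H₂).comp (LinearMap.ker (T : H₁ × H₂ →ₗ[ℂ] H₁ × H₂)).subtype) p ∈ P := by
        rintro ⟨⟨x, y⟩, hp⟩
        have hp' : T (x, y) = 0 := hp
        rw [hTapp] at hp'
        have hfst : D₁ x + A y = 0 := congrArg Prod.fst hp'
        have hsnd : D₂ y = 0 := congrArg Prod.snd hp'
        refine ⟨hsnd, ?_⟩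
        show R₁.mkQ (A y) = 0
        rw [Submodule.mkQ_apply, Submodule.Quotient.mk_eq_zero]
        refine ⟨-x, ?_⟩
        show D₁ (-x) = A y
        rw [map_neg, neg_eq_iff_add_eq_zero]
        exact hfst
      let σ : LinearMap.ker (T : H₁ × H₂ →ₗ[ℂ] H₁ × H₂) →ₗ[ℂ] P :=
        LinearMap.codRestrict P ((LinearMap.snd ℂ H₁ H₂).comp (LinearMap.ker (T : H₁ × H₂ →ₗ[ℂ] H₁ × H₂)).subtype) hmem
      have hσ : Function.Surjective σ := by
        rintro ⟨y, hy2, hyg⟩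
        have hAy : A y ∈ R₁ := by
          have : R₁.mkQ (A y) = 0 := hyg
          rwa [Submodule.mkQ_apply, Submodule.Quotient.mk_eq_zero] at this
        obtain ⟨u, hu⟩ := hAy
        have hker : ((-u : H₁), y) ∈ LinearMap.ker (T : H₁ × H₂ →ₗ[ℂ] H₁ × H₂) := by
          rw [LinearMap.mem_ker, ContinuousLinearMap.coe_coe, hTapp]
          have h0 : D₁ (-u) + A y = 0 := by rw [map_neg, show D₁ u = A y from hu]; abel
          have hy2' : D₂ y = 0 := hy2
          show (D₁ (-u) + A y, D₂ y) = (0, 0)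
          rw [h0, hy2']
        exact ⟨⟨((-u : H₁), y), hker⟩, Subtype.ext rfl⟩
      exact LinearMap.rank_le_of_surjective σ hσ
    set P' : Submodule ℂ (LinearMap.ker (D₂ : H₂ →ₗ[ℂ] H₂)) := Submodule.comap (LinearMap.ker (D₂ : H₂ →ₗ[ℂ] H₂)).subtype P
      with hP'def
    have hrankP' : Module.rank ℂ P' = Module.rank ℂ P :=
      (Submodule.comapSubtypeEquivOfLe (inf_le_left : P ≤ LinearMap.ker (D₂ : H₂ →ₗ[ℂ] H₂))).rank_eq
    have hq2 : Module.rank ℂ ((LinearMap.ker (D₂ : H₂ →ₗ[ℂ] H₂)) ⧸ P') ≤ deficiency D₁ := by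
      set g2 : (LinearMap.ker (D₂ : H₂ →ₗ[ℂ] H₂)) →ₗ[ℂ] (H₁ ⧸ R₁) := gg.comp (LinearMap.ker (D₂ : H₂ →ₗ[ℂ] H₂)).subtype with hg2
      have hker2 : LinearMap.ker g2 = P' := by
        ext y
        constructor
        · intro hy
          exact ⟨y.2, hy⟩
        · intro hy
          exact hy.2
      let q2 := Submodule.liftQ P' g2 (le_of_eq hker2.symm)
      have hq2inj : Function.Injective q2 := by
        rw [← LinearMap.ker_eq_bot]
        exact Submodule.ker_liftQ_eq_bot _ _ _ (le_of_eq hker2)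
      exact LinearMap.rank_le_of_injective q2 hq2inj
    have hsum := rank_quotient_add_rank_of_divisionRing P'
    calc nullity D₂ = Module.rank ℂ ((LinearMap.ker (D₂ : H₂ →ₗ[ℂ] H₂)) ⧸ P') + Module.rank ℂ P' := hsum.symm
      _ < ℵ₀ := add_lt_aleph0 (lt_of_le_of_lt hq2 hd1)
          (by rw [hrankP']; exact lt_of_le_of_lt hrankP hTn)
  -- closed ranges
  have hTrc : IsClosed ((LinearMap.range (T : H₁ × H₂ →ₗ[ℂ] H₁ × H₂) : Submodule ℂ (H₁ × H₂)) : Set (H₁ × H₂)) :=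
    isClosed_range_of_deficiency_lt T hTd
  haveI : FiniteDimensional ℂ (LinearMap.ker (T : H₁ × H₂ →ₗ[ℂ] H₁ × H₂)) := Module.rank_lt_aleph0_iff.mp hTn
  have hprodclosed : IsClosed
      ((Submodule.prod (⊤ : Submodule ℂ H₁) (⊥ : Submodule ℂ H₂) :
        Submodule ℂ (H₁ × H₂)) : Set (H₁ × H₂)) := by
    have hs : ((Submodule.prod (⊤ : Submodule ℂ H₁) (⊥ : Submodule ℂ H₂) :
        Submodule ℂ (H₁ × H₂)) : Set (H₁ × H₂)) = Set.univ ×ˢ {0} := by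
      ext ⟨a, b⟩
      simp [Submodule.mem_prod]
    rw [hs]
    exact isClosed_univ.prod isClosed_singleton
  have hmapT : Submodule.map (T : H₁ × H₂ →ₗ[ℂ] H₁ × H₂) (Submodule.prod ⊤ ⊥) =
      Submodule.prod (LinearMap.range (D₁ : H₁ →ₗ[ℂ] H₁)) (⊥ : Submodule ℂ H₂) := by
    ext ⟨y₁, y₂⟩
    simp only [Submodule.mem_map, Submodule.mem_prod, Submodule.mem_top, Submodule.mem_bot,
      true_and]
    constructor
    · rintro ⟨⟨x₁, x₂⟩, hx₂, h⟩
      rw [ContinuousLinearMap.coe_coe, hTapp] at h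
      dsimp at hx₂ h
      subst hx₂
      have hfst : D₁ x₁ + A 0 = y₁ := congrArg Prod.fst h
      have hsnd : D₂ 0 = y₂ := congrArg Prod.snd h
      rw [map_zero, add_zero] at hfst
      rw [map_zero] at hsnd
      exact ⟨⟨x₁, hfst⟩, hsnd.symm⟩
    · rintro ⟨⟨x, rfl⟩, rfl⟩
      refine ⟨(x, 0), rfl, ?_⟩
      rw [ContinuousLinearMap.coe_coe, hTapp]
      simp
  have hD₁rc : IsClosed ((LinearMap.range (D₁ : H₁ →ₗ[ℂ] H₁) : Submodule ℂ H₁) : Set H₁) := by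
    have hmc := isClosed_map_of_fd_ker T hTrc (Submodule.prod ⊤ ⊥) hprodclosed
    rw [hmapT] at hmc
    have hs : ((LinearMap.range (D₁ : H₁ →ₗ[ℂ] H₁) : Submodule ℂ H₁) : Set H₁) =
        (fun x : H₁ => ((x, (0 : H₂)) : H₁ × H₂)) ⁻¹'
          ((Submodule.prod (LinearMap.range (D₁ : H₁ →ₗ[ℂ] H₁)) (⊥ : Submodule ℂ H₂) :
            Submodule ℂ (H₁ × H₂)) : Set (H₁ × H₂)) := by
      ext x
      simp [Submodule.mem_prod]
    rw [hs]
    exact hmc.preimage (continuous_id.prodMk continuous_const)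
  refine ⟨⟨lt_of_le_of_lt hα1 hTn, hD₁rc⟩, lt_of_le_of_lt hβ2 hTd, ?_⟩
  by_cases hcase : ℵ₀ ≤ deficiency D₁ ∧ ℵ₀ ≤ nullity D₂
  · exact Or.inl hcase
  · right
    have hfin : deficiency D₁ < ℵ₀ ∧ nullity D₂ < ℵ₀ := by
      rcases not_and_or.mp hcase with h | h
      · have h1 : deficiency D₁ < ℵ₀ := lt_of_not_ge h
        exact ⟨h1, he h1⟩
      · have hn2 : nullity D₂ < ℵ₀ := lt_of_not_ge h
        exact ⟨hd hn2, hn2⟩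
    have hD₂rc : IsClosed ((LinearMap.range (D₂ : H₂ →ₗ[ℂ] H₂) : Submodule ℂ H₂) : Set H₂) :=
      isClosed_range_of_deficiency_lt D₂ (lt_of_le_of_lt hβ2 hTd)
    exact ⟨⟨hfin.2, hD₂rc⟩, hfin.1⟩
end
end
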